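/- Let (H, L̃) be a cut-and-project scheme over G with star map ⋆ : p₁(L̃) → H. If a Delone set 𝓛 ⊂ G satisfies 𝓛 ⊂ ⋀(W) for some compact window W ⊂ H, then 𝓛 − 𝓛 ⊂ 𝓛 + F for some finite set F ⊂ G. -/

import Mathlib

open Pointwise

/-- A cut-and-project scheme over G with internal group H: a lattice L̃ in G × H
(uniformly discrete and cocompact subgroup) such that the first projection is
injective on L̃ and the second projection has dense image. -/
structure CutProjectScheme (G H : Type) [AddCommGroup G] [TopologicalSpace G]
    [AddCommGroup H] [TopologicalSpace H] where
  L : AddSubgroup (G × H)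
  unifDiscrete : ∃ U ∈ nhds (0 : G × H), ∀ x ∈ L, x ∈ U → x = 0
  cocompact : ∃ K : Set (G × H), IsCompact K ∧ ∀ g : G × H, ∃ x ∈ L, g - x ∈ K
  projInj : ∀ x ∈ L, ∀ y ∈ L, (x : G × H).1 = (y : G × H).1 → x = y
  denseSnd : Dense (Prod.snd '' (L : Set (G × H)))

/-- The cut-and-project set ⋀(W) associated to a window W ⊂ H. -/
def cutProject {G H : Type} [AddCommGroup G] [TopologicalSpace G]
    [AddCommGroup H] [TopologicalSpace H]
    (S : CutProjectScheme G H) (W : Set H) : Set G :=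
  {g : G | ∃ p ∈ S.L, (p : G × H).1 = g ∧ (p : G × H).2 ∈ W}

open Topology

/-!
Take `d = x - y` with `x, y ∈ 𝓛` and, by relative density, `z ∈ 𝓛` with `d - z` in a fixed compact
set `K`. Since `d - z ∈ ⋀(W) - ⋀(W) - ⋀(W) ⊆ ⋀(W - W - W)`, the difference `d - z` ranges over
`⋀(W - W - W) ∩ K`. This set is finite: it is the first projection of the lattice points in the
compact set `K × (W - W - W)`, and a uniformly discrete set meets a compact set in finitely many
points.
-/

theorem IsCompact.sub {X : Type*} [TopologicalSpace X] [Sub X] [ContinuousSub X]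
    {s t : Set X} (hs : IsCompact s) (ht : IsCompact t) : IsCompact (s - t) := by
  rw [← Set.sub_image_prod]
  exact (hs.prod ht).image continuous_sub

section UniformlyDiscrete

variable {X : Type*} [AddGroup X] [TopologicalSpace X]

def IsUniformlyDiscrete (s : Set X) : Prop :=
  ∃ U ∈ 𝓝 (0 : X), ∀ x ∈ s, ∀ y ∈ s, x - y ∈ U → x = y

theorem AddSubgroup.isUniformlyDiscrete_of_exists_nhds {L : AddSubgroup X}
    (hL : ∃ U ∈ 𝓝 (0 : X), ∀ x ∈ L, x ∈ U → x = 0) : IsUniformlyDiscrete (L : Set X) := by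
  obtain ⟨U, hU, hU0⟩ := hL
  exact ⟨U, hU, fun x hx y hy hxy => sub_eq_zero.1 (hU0 _ (L.sub_mem hx hy) hxy)⟩

theorem IsUniformlyDiscrete.finite_inter_of_isCompact [IsTopologicalAddGroup X] {s K : Set X}
    (hs : IsUniformlyDiscrete s) (hK : IsCompact K) : (s ∩ K).Finite := by
  obtain ⟨U, hU, hsU⟩ := hs
  obtain ⟨V, hV, hVU⟩ := exists_nhds_half_neg hU
  -- cover `K` by finitely many translates `x + V`; each of them contains at most one point of `s`
  obtain ⟨t, -, hKt⟩ := hK.elim_nhds_subcover (fun x => (· - x) ⁻¹' V)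
    fun x _ => (continuous_sub_right x).continuousAt.preimage_mem_nhds (by simpa using hV)
  refine (t.finite_toSet.biUnion fun x _ => Set.Subsingleton.finite ?_).subset
    ((Set.inter_subset_inter_right s hKt).trans (Set.inter_iUnion₂ _ _).subset)
  rintro a ⟨ha, haV⟩ b ⟨hb, hbV⟩
  exact hsU a ha b hb (sub_sub_sub_cancel_right a b x ▸ hVU _ haV _ hbV)

end UniformlyDiscrete

namespace CutProjectScheme

variable {G H : Type} [AddCommGroup G] [TopologicalSpace G] [AddCommGroup H] [TopologicalSpace H]
  (S : CutProjectScheme G H)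

theorem sub_mem_cutProject {A B : Set H} {x y : G} (hx : x ∈ cutProject S A)
    (hy : y ∈ cutProject S B) : x - y ∈ cutProject S (A - B) := by
  obtain ⟨p, hp, rfl, hpA⟩ := hx
  obtain ⟨q, hq, rfl, hqB⟩ := hy
  exact ⟨p - q, S.L.sub_mem hp hq, rfl, Set.sub_mem_sub hpA hqB⟩

theorem finite_cutProject_inter_of_isCompact [IsTopologicalAddGroup G] [IsTopologicalAddGroup H]
    {W : Set H} {K : Set G} (hW : IsCompact W) (hK : IsCompact K) :
    (cutProject S W ∩ K).Finite := by
  have hfin : ((S.L : Set (G × H)) ∩ K ×ˢ W).Finite :=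
    (AddSubgroup.isUniformlyDiscrete_of_exists_nhds S.unifDiscrete).finite_inter_of_isCompact
      (hK.prod hW)
  refine (hfin.image Prod.fst).subset ?_
  rintro _ ⟨⟨p, hp, rfl, hpW⟩, hpK⟩
  exact ⟨p, ⟨hp, hpK, hpW⟩, rfl⟩

end CutProjectScheme

theorem delone_in_cutProject_is_meyer_general
    {G H : Type} [AddCommGroup G] [TopologicalSpace G] [IsTopologicalAddGroup G]
    [AddCommGroup H] [TopologicalSpace H] [IsTopologicalAddGroup H]
    (S : CutProjectScheme G H) (W : Set H) (hW : IsCompact W)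
    (𝓛 : Set G)
    (hRD : ∃ K : Set G, IsCompact K ∧ ∀ g : G, ∃ x ∈ 𝓛, g - x ∈ K)
    (hsub : 𝓛 ⊆ cutProject S W) :
    ∃ F : Set G, F.Finite ∧ 𝓛 - 𝓛 ⊆ 𝓛 + F := by
  obtain ⟨K, hK, hLK⟩ := hRD
  refine ⟨cutProject S (W - W - W) ∩ K,
    S.finite_cutProject_inter_of_isCompact ((hW.sub hW).sub hW) hK, ?_⟩
  rintro _ ⟨x, hx, y, hy, rfl⟩
  obtain ⟨z, hz, hxyz⟩ := hLK (x - y)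
  have hmem : x - y - z ∈ cutProject S (W - W - W) :=
    S.sub_mem_cutProject (S.sub_mem_cutProject (hsub hx) (hsub hy)) (hsub hz)
  exact ⟨z, hz, x - y - z, ⟨hmem, hxyz⟩, add_sub_cancel z (x - y)⟩

/-- If a Delone set 𝓛 is contained in ⋀(W) for a compact window W,
then 𝓛 − 𝓛 ⊂ 𝓛 + F for some finite set F. -/
theorem delone_in_cutProject_is_meyer
    {G H : Type} [AddCommGroup G] [TopologicalSpace G] [IsTopologicalAddGroup G]
    [LocallyCompactSpace G]
    [AddCommGroup H] [TopologicalSpace H] [IsTopologicalAddGroup H]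
    [LocallyCompactSpace H]
    (S : CutProjectScheme G H) (W : Set H) (hW : IsCompact W)
    (𝓛 : Set G)
    (hUD : ∃ U ∈ nhds (0 : G), ∀ x ∈ 𝓛, ∀ y ∈ 𝓛, x - y ∈ U → x = y)
    (hRD : ∃ K : Set G, IsCompact K ∧ ∀ g : G, ∃ x ∈ 𝓛, g - x ∈ K)
    (hsub : 𝓛 ⊆ cutProject S W) :
    ∃ F : Set G, F.Finite ∧ 𝓛 - 𝓛 ⊆ 𝓛 + F :=
  delone_in_cutProject_is_meyer_general S W hW 𝓛 hRD hsub
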